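/- arXiv:1603.03340 — 8 statements merged into one kernel-verified Lean document; each statement's English description precedes it below -/
import Mathlib

section
/- Let F(x,y) = (αx + βy)^r − (γx + δy)^r be a diagonalizable form of degree r with j = αδ − βγ ≠ 0. Then the discriminant Δ of F satisfies Δ = (−1)^{(r−1)(r+2)/2} · r^r · j^{r(r−1)}. -/
open Finset Polynomial


lemma aux_prod_X_sub (r : ℕ) (hr : 0 < r) (ζ : ℂ) (hζ : IsPrimitiveRoot ζ r) :
    (X : ℂ[X]) ^ r - 1 = ∏ i ∈ range r, (X - C (ζ ^ i)) := by
  have : NeZero r := ⟨hr.ne'⟩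
  rw [Polynomial.X_pow_sub_one_eq_prod hr hζ]
  have himg : Polynomial.nthRootsFinset r (1 : ℂ) = (range r).image (ζ ^ ·) := by
    ext x
    simp only [Polynomial.mem_nthRootsFinset hr (1 : ℂ), mem_image, mem_range]
    constructor
    · intro hx
      obtain ⟨i, hi, hx⟩ := hζ.eq_pow_of_pow_eq_one hx
      exact ⟨i, hi, hx⟩
    · rintro ⟨i, hi, rfl⟩
      rw [← pow_mul, mul_comm i r, pow_mul, hζ.pow_eq_one, one_pow]
  rw [himg, Finset.prod_image]
  intro i hi j hj h
  exact hζ.pow_inj (mem_range.mp hi) (mem_range.mp hj) h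

lemma aux_inner (r : ℕ) (hr : 0 < r) (ζ : ℂ) (hζ : IsPrimitiveRoot ζ r) (i : ℕ) (hi : i < r) :
    ∏ j ∈ (range r).erase i, (ζ ^ i - ζ ^ j) = (r : ℂ) * ζ ^ (i * (r - 1)) := by
  have hsplit : (X : ℂ[X]) ^ r - 1
      = (X - C (ζ ^ i)) * ∏ j ∈ (range r).erase i, (X - C (ζ ^ j)) := by
    rw [aux_prod_X_sub r hr ζ hζ]; exact (Finset.mul_prod_erase _ _ (mem_range.mpr hi)).symm
  have hder := congrArg Polynomial.derivative hsplit
  rw [derivative_sub, derivative_one, derivative_X_pow, derivative_mul, derivative_sub,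
    derivative_X, derivative_C] at hder
  have hev := congrArg (Polynomial.eval (ζ ^ i)) hder
  simp only [eval_mul, eval_add, eval_sub, eval_pow, eval_X, eval_C, eval_natCast,
    Polynomial.eval_prod, sub_self, zero_mul, mul_zero, add_zero, sub_zero, one_mul,
    zero_sub, zero_add] at hev

  rw [← pow_mul] at hev
  exact hev.symm

lemma aux_half (r : ℕ) (hr : 0 < r) (ζ : ℂ) (hζ : IsPrimitiveRoot ζ r) :
    ζ ^ (r * (r - 1) / 2) = (-1 : ℂ) ^ (r - 1) := by
  rcases Nat.even_or_odd r with ⟨m, hm⟩ | ⟨m, hm⟩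
  · have hm0 : 0 < m := by omega
    have h1 : r * (r - 1) = 2 * (m * (r - 1)) := by rw [hm]; ring
    have h2 : r * (r - 1) / 2 = m * (r - 1) := by omega
    have hm1 : ζ ^ m * ζ ^ m = 1 := by
      rw [← pow_add, show m + m = r from hm.symm]; exact hζ.pow_eq_one
    have hmne : ζ ^ m ≠ 1 := hζ.pow_ne_one_of_pos_of_lt hm0.ne' (by omega)
    have hneg : ζ ^ m = -1 := (mul_self_eq_one_iff.mp hm1).resolve_left hmne
    rw [h2, pow_mul, hneg]
  · have h0 : r - 1 = 2 * m := by omega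
    have h1 : r * (r - 1) = 2 * (r * m) := by rw [h0]; ring
    have h2 : r * (r - 1) / 2 = r * m := by omega
    rw [h2, pow_mul, hζ.pow_eq_one, one_pow, h0, pow_mul]
    norm_num

lemma aux_const (r : ℕ) (c : ℂ) :
    ∏ i ∈ range r, ∏ _j ∈ Ico (i + 1) r, c = c ^ (r * (r - 1) / 2) := by
  have key : ∑ i ∈ range r, (r - (i + 1)) = r * (r - 1) / 2 := by
    have h1 := Finset.sum_range_reflect (fun j => j) r
    have h2 : ∑ i ∈ range r, (r - (i + 1)) = ∑ i ∈ range r, (r - 1 - i) :=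
      Finset.sum_congr rfl fun i hi => by omega
    rw [h2, h1, Finset.sum_range_id]
  calc ∏ i ∈ range r, ∏ _j ∈ Ico (i + 1) r, c
      = ∏ i ∈ range r, c ^ (r - (i + 1)) := by
        refine Finset.prod_congr rfl fun i _ => ?_
        rw [Finset.prod_const, Nat.card_Ico]
    _ = c ^ ∑ i ∈ range r, (r - (i + 1)) := by rw [Finset.prod_pow_eq_pow_sum]
    _ = _ := by rw [key]

lemma aux_count (r : ℕ) (A : ℕ → ℂ) :
    ∏ i ∈ range r, ∏ j ∈ Ico (i + 1) r, (A i * A j) = (∏ i ∈ range r, A i) ^ (r - 1) := by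
  rw [← Finset.prod_pow]
  have h1 : ∀ i ∈ range r, ∏ j ∈ Ico (i + 1) r, (A i * A j)
      = A i ^ (r - (i + 1)) * ∏ j ∈ Ico (i + 1) r, A j := fun i _ => by
    rw [Finset.prod_mul_distrib, Finset.prod_const, Nat.card_Ico]
  rw [Finset.prod_congr rfl h1, Finset.prod_mul_distrib]
  have h2 : ∏ i ∈ range r, ∏ j ∈ Ico (i + 1) r, A j = ∏ j ∈ range r, A j ^ j := by
    rw [Finset.prod_comm' (t' := range r) (s' := fun j => range j)
      (f := fun _ j => A j) (fun x y => by simp only [mem_range, mem_Ico]; omega)]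
    exact Finset.prod_congr rfl fun j _ => by rw [Finset.prod_const, card_range]
  rw [h2, ← Finset.prod_mul_distrib]
  refine Finset.prod_congr rfl fun i hi => ?_
  rw [← pow_add]
  congr 1
  simp only [mem_range] at hi
  omega

lemma aux_zeta (r : ℕ) (hr : 0 < r) (ζ : ℂ) (hζ : IsPrimitiveRoot ζ r) :
    ∏ i ∈ range r, ∏ j ∈ Ico (i + 1) r, (ζ ^ i - ζ ^ j) ^ 2
      = (-1 : ℂ) ^ (r * (r - 1) / 2 + (r - 1)) * (r : ℂ) ^ r := by
  set T := ∏ i ∈ range r, ∏ j ∈ Ico (i + 1) r, (ζ ^ i - ζ ^ j) with hT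
  have hLHS : ∏ i ∈ range r, ∏ j ∈ Ico (i + 1) r, (ζ ^ i - ζ ^ j) ^ 2 = T ^ 2 := by
    rw [hT, ← Finset.prod_pow]
    exact Finset.prod_congr rfl fun i _ => by rw [Finset.prod_pow]
  have hsplit : ∏ i ∈ range r, ∏ j ∈ (range r).erase i, (ζ ^ i - ζ ^ j)
      = (∏ i ∈ range r, ∏ j ∈ range i, (ζ ^ i - ζ ^ j)) * T := by
    rw [hT, ← Finset.prod_mul_distrib]
    refine Finset.prod_congr rfl fun i hi => ?_
    rw [← Finset.prod_union (by rw [Finset.disjoint_left]; intro a; simp only [mem_range, mem_Ico]; omega)]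
    apply Finset.prod_congr _ fun _ _ => rfl
    ext a; simp only [mem_erase, mem_range, mem_union, mem_Ico, mem_range] at *
    omega
  have hlow : ∏ i ∈ range r, ∏ j ∈ range i, (ζ ^ i - ζ ^ j)
      = ∏ i ∈ range r, ∏ j ∈ Ico (i + 1) r, (ζ ^ j - ζ ^ i) := by
    rw [Finset.prod_comm' (t' := range r) (s' := fun y => Ico (y + 1) r)
      (f := fun x y => ζ ^ x - ζ ^ y) (fun x y => by simp only [mem_range, mem_Ico]; omega)]
  have hneg : ∏ i ∈ range r, ∏ j ∈ Ico (i + 1) r, (ζ ^ j - ζ ^ i)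
      = (-1 : ℂ) ^ (r * (r - 1) / 2) * T := by
    calc ∏ i ∈ range r, ∏ j ∈ Ico (i + 1) r, (ζ ^ j - ζ ^ i)
        = ∏ i ∈ range r, ∏ j ∈ Ico (i + 1) r, ((-1) * (ζ ^ i - ζ ^ j)) := by
          refine Finset.prod_congr rfl fun i _ => Finset.prod_congr rfl fun j _ => by ring
      _ = (∏ i ∈ range r, ∏ _j ∈ Ico (i + 1) r, (-1 : ℂ)) * T := by
          rw [hT, ← Finset.prod_mul_distrib]
          exact Finset.prod_congr rfl fun i _ => by rw [Finset.prod_mul_distrib]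
      _ = _ := by rw [aux_const]
  have hin : ∏ i ∈ range r, ∏ j ∈ (range r).erase i, (ζ ^ i - ζ ^ j)
      = (r : ℂ) ^ r * ((-1 : ℂ) ^ (r - 1)) ^ (r - 1) := by
    have hz : ∏ i ∈ range r, ζ ^ (i * (r - 1)) = ((-1 : ℂ) ^ (r - 1)) ^ (r - 1) := by
      have h3 : ∀ i ∈ range r, ζ ^ (i * (r - 1)) = (ζ ^ (r - 1)) ^ i := fun i _ => by
        rw [← pow_mul, mul_comm]
      rw [Finset.prod_congr rfl h3, Finset.prod_pow_eq_pow_sum, Finset.sum_range_id,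
        ← pow_mul, mul_comm (r - 1), pow_mul, aux_half r hr ζ hζ]
    rw [Finset.prod_congr rfl fun i hi => aux_inner r hr ζ hζ i (mem_range.mp hi),
      Finset.prod_mul_distrib, Finset.prod_const, card_range, hz]
  have hsq : (((-1 : ℂ) ^ (r - 1)) ^ (r - 1)) = (-1 : ℂ) ^ (r - 1) := by
    rcases Nat.even_or_odd (r - 1) with he | ho
    · simp [he.neg_one_pow]
    · simp [ho.neg_one_pow]
  have hkey : T ^ 2 = (-1 : ℂ) ^ (r * (r - 1) / 2) * ((r : ℂ) ^ r * (-1 : ℂ) ^ (r - 1)) := by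
    have h1 : ((-1 : ℂ) ^ (r * (r - 1) / 2)) * ((-1 : ℂ) ^ (r * (r - 1) / 2)) = 1 := by
      rw [← pow_add]; exact Even.neg_one_pow ⟨_, rfl⟩
    have h2 := hsplit
    rw [hlow, hneg, mul_assoc, ← pow_two, hin, hsq] at h2
    calc T ^ 2 = ((-1 : ℂ) ^ (r * (r - 1) / 2) * ((-1 : ℂ) ^ (r * (r - 1) / 2))) * T ^ 2 := by
          rw [h1, one_mul]
      _ = (-1 : ℂ) ^ (r * (r - 1) / 2) * ((-1 : ℂ) ^ (r * (r - 1) / 2) * T ^ 2) := by ring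
      _ = _ := by rw [← h2]
  rw [hLHS, hkey, pow_add]; ring
theorem stmt_1 (r : ℕ) (hr : 3 ≤ r) (α β γ δ : ℂ)
    (hj : α * δ - β * γ ≠ 0) (ζ : ℂ) (hζ : IsPrimitiveRoot ζ r)
    (hroot : ∀ k < r, α - ζ ^ k * γ ≠ 0) :
    (α ^ r - γ ^ r) ^ (2 * r - 2) *
      ∏ i ∈ Finset.range r, ∏ j ∈ Finset.Ico (i + 1) r,
        ((ζ ^ i * δ - β) / (α - ζ ^ i * γ) - (ζ ^ j * δ - β) / (α - ζ ^ j * γ)) ^ 2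
    = (-1 : ℂ) ^ (((r - 1) * (r + 2)) / 2) * (r : ℂ) ^ r *
        (α * δ - β * γ) ^ (r * (r - 1)) := by
  have hr0 : 0 < r := by omega
  have hNN : 2 * (r * (r - 1) / 2) = r * (r - 1) := by
    obtain ⟨k, hk⟩ := Nat.even_mul_succ_self (r - 1)
    have hrr : r * (r - 1) = (r - 1) * (r - 1 + 1) := by
      rw [show r - 1 + 1 = r by omega, Nat.mul_comm]
    omega
  have hsign : (r - 1) * (r + 2) / 2 = r * (r - 1) / 2 + (r - 1) := by
    have hx : (r - 1) * (r + 2) = (r - 1) * r + (r - 1) * 2 := Nat.mul_add _ _ _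
    have hy : (r - 1) * r = r * (r - 1) := Nat.mul_comm _ _
    omega
  have hprodA : ∏ i ∈ range r, (α - ζ ^ i * γ) = α ^ r - γ ^ r := by
    by_cases hγ : γ = 0
    · simp [hγ, hr0.ne']
    · have hev := congrArg (Polynomial.eval (α / γ)) (aux_prod_X_sub r hr0 ζ hζ)
      simp only [eval_sub, eval_pow, eval_X, eval_one, Polynomial.eval_prod, eval_C] at hev
      have h1 : ∏ i ∈ range r, (α - ζ ^ i * γ) = ∏ i ∈ range r, (γ * (α / γ - ζ ^ i)) :=
        Finset.prod_congr rfl fun i _ => by field_simp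
      rw [h1, Finset.prod_mul_distrib, Finset.prod_const, card_range, ← hev]
      rw [div_pow, mul_sub, mul_div_cancel₀ _ (pow_ne_zero _ hγ), mul_one]
  have hAne : (∏ i ∈ range r, (α - ζ ^ i * γ)) ≠ 0 :=
    Finset.prod_ne_zero_iff.mpr fun i hi => hroot i (mem_range.mp hi)
  have hterm : ∀ i ∈ range r, ∀ j ∈ Ico (i + 1) r,
      ((ζ ^ i * δ - β) / (α - ζ ^ i * γ) - (ζ ^ j * δ - β) / (α - ζ ^ j * γ)) ^ 2
      = ((ζ ^ i - ζ ^ j) * (α * δ - β * γ)) ^ 2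
        / ((α - ζ ^ i * γ) * (α - ζ ^ j * γ)) ^ 2 := by
    intro i hi j hj
    rw [mem_range] at hi; rw [mem_Ico] at hj
    have h1 : (ζ ^ i * δ - β) / (α - ζ ^ i * γ) - (ζ ^ j * δ - β) / (α - ζ ^ j * γ)
        = ((ζ ^ i - ζ ^ j) * (α * δ - β * γ)) / ((α - ζ ^ i * γ) * (α - ζ ^ j * γ)) := by
      rw [div_sub_div _ _ (hroot i hi) (hroot j hj.2)]
      congr 1
      ring
    rw [h1, div_pow]
  rw [Finset.prod_congr rfl fun i hi => Finset.prod_congr rfl fun j hj => hterm i hi j hj]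
  have hsplit : ∏ i ∈ range r, ∏ j ∈ Ico (i + 1) r,
      (((ζ ^ i - ζ ^ j) * (α * δ - β * γ)) ^ 2
        / ((α - ζ ^ i * γ) * (α - ζ ^ j * γ)) ^ 2)
      = (∏ i ∈ range r, ∏ j ∈ Ico (i + 1) r, ((ζ ^ i - ζ ^ j) * (α * δ - β * γ)) ^ 2)
        / (∏ i ∈ range r, ∏ j ∈ Ico (i + 1) r,
            ((α - ζ ^ i * γ) * (α - ζ ^ j * γ)) ^ 2) := by
    rw [← Finset.prod_div_distrib]
    exact Finset.prod_congr rfl fun i _ => by rw [Finset.prod_div_distrib]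
  rw [hsplit]
  have hnum : ∏ i ∈ range r, ∏ j ∈ Ico (i + 1) r, ((ζ ^ i - ζ ^ j) * (α * δ - β * γ)) ^ 2
      = ((-1 : ℂ) ^ (r * (r - 1) / 2 + (r - 1)) * (r : ℂ) ^ r)
        * (α * δ - β * γ) ^ (r * (r - 1)) := by
    have e1 : ∏ i ∈ range r, ∏ j ∈ Ico (i + 1) r, ((ζ ^ i - ζ ^ j) * (α * δ - β * γ)) ^ 2
        = (∏ i ∈ range r, ∏ j ∈ Ico (i + 1) r, (ζ ^ i - ζ ^ j) ^ 2)
          * (∏ i ∈ range r, ∏ _j ∈ Ico (i + 1) r, (α * δ - β * γ) ^ 2) := by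
      rw [← Finset.prod_mul_distrib]
      refine Finset.prod_congr rfl fun i _ => ?_
      rw [← Finset.prod_mul_distrib]
      exact Finset.prod_congr rfl fun j _ => by ring
    rw [e1, aux_zeta r hr0 ζ hζ, aux_const, ← pow_mul,
      hNN]
  have hden : ∏ i ∈ range r, ∏ j ∈ Ico (i + 1) r,
      ((α - ζ ^ i * γ) * (α - ζ ^ j * γ)) ^ 2
      = (∏ i ∈ range r, (α - ζ ^ i * γ)) ^ (2 * r - 2) := by
    have e2 : ∏ i ∈ range r, ∏ j ∈ Ico (i + 1) r,
        ((α - ζ ^ i * γ) * (α - ζ ^ j * γ)) ^ 2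
        = (∏ i ∈ range r, ∏ j ∈ Ico (i + 1) r,
            ((α - ζ ^ i * γ) * (α - ζ ^ j * γ))) ^ 2 := by
      rw [← Finset.prod_pow]
      exact Finset.prod_congr rfl fun i _ => by rw [Finset.prod_pow]
    rw [e2, aux_count, ← pow_mul, show (r - 1) * 2 = 2 * r - 2 by omega]
  rw [hnum, hden, ← hprodA, hsign]
  rw [mul_comm ((∏ i ∈ range r, (α - ζ ^ i * γ)) ^ (2 * r - 2)),
    div_mul_cancel₀ _ (pow_ne_zero _ hAne)]
end

section
/- Let F(x,y) = u^r − v^r with u = αx + βy, v = γx + δy, and j = αδ − βγ ≠ 0. Let H be the Hessian of F. Then the Jacobian P(x,y) = F_x H_y − F_y H_x equals −r³(r−1)²(r−2) j³ (uv)^{r−3}(u^r + v^r). -/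
private lemma lin_hasDerivAt (a b : ℂ) (x : ℂ) :
    HasDerivAt (fun t : ℂ => a * t + b) a x := by
  simpa using ((hasDerivAt_id x).const_mul a).add_const b

private lemma deriv_comb (c₁ c₂ a b c d : ℂ) (m : ℕ) (x : ℂ) :
    deriv (fun t => c₁ * (a * t + b) ^ m - c₂ * (c * t + d) ^ m) x
      = c₁ * ((m : ℂ) * (a * x + b) ^ (m - 1) * a)
        - c₂ * ((m : ℂ) * (c * x + d) ^ (m - 1) * c) := by
  have h1 := ((lin_hasDerivAt a b x).pow m).const_mul c₁
  have h2 := ((lin_hasDerivAt c d x).pow m).const_mul c₂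
  simpa [Pi.sub_def] using (h1.sub h2).deriv

private lemma deriv_prodpow (K a b c d : ℂ) (m : ℕ) (x : ℂ) :
    deriv (fun t => K * ((a * t + b) * (c * t + d)) ^ m) x
      = K * ((m : ℂ) * ((a * x + b) * (c * x + d)) ^ (m - 1)
          * (a * (c * x + d) + (a * x + b) * c)) := by
  have h := (((lin_hasDerivAt a b x).mul (lin_hasDerivAt c d x)).pow m).const_mul K
  simpa using h.deriv

theorem stmt_3 (r : ℕ) (hr : 3 ≤ r) (α β γ δ : ℂ)
    (hj : α * δ - β * γ ≠ 0)
    (F H : ℂ → ℂ → ℂ)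
    (hF : ∀ x y : ℂ, F x y = (α * x + β * y) ^ r - (γ * x + δ * y) ^ r)
    (hH : ∀ x y : ℂ, H x y =
      (deriv (fun s => deriv (fun t => F t y) s) x) *
        (deriv (fun s => deriv (fun t => F x t) s) y) -
        (deriv (fun s => deriv (fun t => F t s) x) y) ^ 2)
    (x y : ℂ) :
    (deriv (fun t => F t y) x) * (deriv (fun t => H x t) y) -
      (deriv (fun t => F x t) y) * (deriv (fun t => H t y) x)
    = -(r : ℂ) ^ 3 * ((r : ℂ) - 1) ^ 2 * ((r : ℂ) - 2) * (α * δ - β * γ) ^ 3 *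
        ((α * x + β * y) * (γ * x + δ * y)) ^ (r - 3) *
        ((α * x + β * y) ^ r + (γ * x + δ * y) ^ r) := by
  obtain ⟨k, rfl⟩ : ∃ k, r = k + 3 := ⟨r - 3, by omega⟩
  have e1 : k + 3 - 1 = k + 2 := rfl
  have e2 : k + 2 - 1 = k + 1 := rfl
  have e3 : k + 1 - 1 = k := rfl
  have e4 : k + 3 - 3 = k := rfl
  -- first derivatives
  have hFx : ∀ X Y : ℂ, deriv (fun t => F t Y) X
      = (k + 3 : ℂ) * (α * X + β * Y) ^ (k + 2) * α
        - (k + 3 : ℂ) * (γ * X + δ * Y) ^ (k + 2) * γ := by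
    intro X Y
    have h : (fun t => F t Y)
        = fun t => (1 : ℂ) * (α * t + β * Y) ^ (k + 3) - 1 * (γ * t + δ * Y) ^ (k + 3) := by
      funext t; rw [hF]; ring
    rw [h, deriv_comb, e1]; push_cast; ring
  have hFy : ∀ X Y : ℂ, deriv (fun t => F X t) Y
      = (k + 3 : ℂ) * (α * X + β * Y) ^ (k + 2) * β
        - (k + 3 : ℂ) * (γ * X + δ * Y) ^ (k + 2) * δ := by
    intro X Y
    have h : (fun t => F X t)
        = fun t => (1 : ℂ) * (β * t + α * X) ^ (k + 3) - 1 * (δ * t + γ * X) ^ (k + 3) := by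
      funext t; rw [hF]; ring_nf
    rw [h, deriv_comb, e1]; push_cast; ring_nf
  -- second derivatives
  have hFxx : ∀ X Y : ℂ, deriv (fun s => deriv (fun t => F t Y) s) X
      = (k + 3 : ℂ) * (k + 2 : ℂ)
        * ((α * X + β * Y) ^ (k + 1) * α ^ 2 - (γ * X + δ * Y) ^ (k + 1) * γ ^ 2) := by
    intro X Y
    have h : (fun s => deriv (fun t => F t Y) s)
        = fun s => ((k + 3 : ℂ) * α) * (α * s + β * Y) ^ (k + 2)
            - ((k + 3 : ℂ) * γ) * (γ * s + δ * Y) ^ (k + 2) := by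
      funext s; rw [hFx]; ring
    rw [h, deriv_comb, e2]; push_cast; ring
  have hFyy : ∀ X Y : ℂ, deriv (fun s => deriv (fun t => F X t) s) Y
      = (k + 3 : ℂ) * (k + 2 : ℂ)
        * ((α * X + β * Y) ^ (k + 1) * β ^ 2 - (γ * X + δ * Y) ^ (k + 1) * δ ^ 2) := by
    intro X Y
    have h : (fun s => deriv (fun t => F X t) s)
        = fun s => ((k + 3 : ℂ) * β) * (β * s + α * X) ^ (k + 2)
            - ((k + 3 : ℂ) * δ) * (δ * s + γ * X) ^ (k + 2) := by
      funext s; rw [hFy]; ring_nf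
    rw [h, deriv_comb, e2]; push_cast; ring_nf
  have hFxy : ∀ X Y : ℂ, deriv (fun s => deriv (fun t => F t s) X) Y
      = (k + 3 : ℂ) * (k + 2 : ℂ)
        * ((α * X + β * Y) ^ (k + 1) * (α * β) - (γ * X + δ * Y) ^ (k + 1) * (γ * δ)) := by
    intro X Y
    have h : (fun s => deriv (fun t => F t s) X)
        = fun s => ((k + 3 : ℂ) * α) * (β * s + α * X) ^ (k + 2)
            - ((k + 3 : ℂ) * γ) * (δ * s + γ * X) ^ (k + 2) := by
      funext s; rw [hFx]; ring_nf
    rw [h, deriv_comb, e2]; push_cast; ring_nf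
  -- Hessian closed form
  have hH' : ∀ X Y : ℂ, H X Y
      = (-((k + 3 : ℂ) ^ 2 * (k + 2 : ℂ) ^ 2 * (α * δ - β * γ) ^ 2))
        * ((α * X + β * Y) ^ (k + 1) * (γ * X + δ * Y) ^ (k + 1)) := by
    intro X Y
    rw [hH, hFxx, hFyy, hFxy]; ring
  -- derivatives of H
  have hHx : deriv (fun t => H t y) x
      = (-((k + 3 : ℂ) ^ 2 * (k + 2 : ℂ) ^ 2 * (α * δ - β * γ) ^ 2))
        * ((k + 1 : ℂ) * ((α * x + β * y) ^ k * (γ * x + δ * y) ^ k)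
          * (α * (γ * x + δ * y) + (α * x + β * y) * γ)) := by
    have h : (fun t => H t y)
        = fun t => (-((k + 3 : ℂ) ^ 2 * (k + 2 : ℂ) ^ 2 * (α * δ - β * γ) ^ 2))
            * ((α * t + β * y) * (γ * t + δ * y)) ^ (k + 1) := by
      funext t; rw [hH', mul_pow (α * t + β * y) (γ * t + δ * y) (k + 1)]
    rw [h, deriv_prodpow, e3, mul_pow]; push_cast; ring
  have hHy : deriv (fun t => H x t) y
      = (-((k + 3 : ℂ) ^ 2 * (k + 2 : ℂ) ^ 2 * (α * δ - β * γ) ^ 2))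
        * ((k + 1 : ℂ) * ((α * x + β * y) ^ k * (γ * x + δ * y) ^ k)
          * (β * (γ * x + δ * y) + (α * x + β * y) * δ)) := by
    have h : (fun t => H x t)
        = fun t => (-((k + 3 : ℂ) ^ 2 * (k + 2 : ℂ) ^ 2 * (α * δ - β * γ) ^ 2))
            * ((β * t + α * x) * (δ * t + γ * x)) ^ (k + 1) := by
      funext t
      rw [hH', mul_pow (β * t + α * x) (δ * t + γ * x) (k + 1),
        add_comm (α * x) (β * t), add_comm (γ * x) (δ * t)]
    rw [h, deriv_prodpow, e3, mul_pow, add_comm (β * y) (α * x), add_comm (δ * y) (γ * x)]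
    push_cast; ring
  rw [hFx, hFy, hHx, hHy, e4, mul_pow]
  push_cast
  ring
end

section
/- Let A, B, C be integers with C ≥ A ≥ |B| and D = B² − 4AC < 0. Then for all real x, y one has Ax² + Bxy + Cy² ≥ y² · √(−3D)/4. -/
theorem stmt_4 (A B C : ℤ) (hAC : A ≤ C) (hBA : |B| ≤ A)
    (hD : B ^ 2 - 4 * A * C < 0) (x y : ℝ) :
    (A : ℝ) * x ^ 2 + (B : ℝ) * x * y + (C : ℝ) * y ^ 2 ≥
      y ^ 2 * Real.sqrt (-3 * ((B : ℝ) ^ 2 - 4 * (A : ℝ) * (C : ℝ))) / 4 := by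
  have hA1 : (1:ℤ) ≤ A := by nlinarith [sq_abs B, abs_nonneg B]
  have ha : (1:ℝ) ≤ (A:ℝ) := by exact_mod_cast hA1
  have hc : (A:ℝ) ≤ (C:ℝ) := by exact_mod_cast hAC
  have hb2 : (B:ℝ)^2 ≤ (A:ℝ)^2 := by
    have h := sq_abs B
    have : B^2 ≤ A^2 := by nlinarith [abs_nonneg B]
    exact_mod_cast this
  set a := (A:ℝ); set b := (B:ℝ); set c := (C:ℝ)
  set d : ℝ := 4*a*c - b^2 with hddef
  have hd3 : 3*a^2 ≤ d := by nlinarith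
  have hdpos : 0 < d := by nlinarith
  have hrw : -3 * (b^2 - 4*a*c) = 3*d := by ring
  rw [hrw]
  have hs : Real.sqrt (3*d) ≤ d/a := by
    rw [show d/a = Real.sqrt ((d/a)^2) from (Real.sqrt_sq (by positivity)).symm]
    apply Real.sqrt_le_sqrt
    rw [div_pow, le_div_iff₀ (by positivity)]
    nlinarith
  have hsa : Real.sqrt (3*d) * a ≤ d := by
    rw [← le_div_iff₀ (by positivity)]; exact hs
  have hs0 : 0 ≤ Real.sqrt (3*d) := Real.sqrt_nonneg _
  nlinarith [sq_nonneg (2*a*x + b*y), sq_nonneg y,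
    mul_le_mul_of_nonneg_left hsa (sq_nonneg y)]
end

section
/- For every prime p and integers a, m with m ≥ 1 and r ≥ 1, the rational number binomial(a/r, m) · r^{2m}, i.e., a(a−r)(a−2r)···(a−r(m−1))·r^m/m!, is a p-adic integer. Consequently binomial(a/r, m)·r^{2m} ∈ ℤ. -/
open Finset

-- descPochhammer eval as product
lemma descPoch_prod (b : ℤ) (m : ℕ) :
    (descPochhammer ℤ m).eval b = ∏ i ∈ range m, (b - i) := by
  induction m with
  | zero => simp
  | succ n ih =>
    rw [descPochhammer_succ_right, prod_range_succ, ← ih]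
    simp [mul_comm]

lemma fact_dvd_prod (b : ℤ) (m : ℕ) :
    (m.factorial : ℤ) ∣ ∏ i ∈ range m, (b - i) := by
  rw [← descPoch_prod]
  have h := Ring.descPochhammer_eq_factorial_smul_choose (R := ℤ) b m
  rw [Polynomial.eval_eq_smeval, h, nsmul_eq_mul]
  exact Dvd.intro _ rfl

lemma dvd_prod_sub {d : ℤ} {m : ℕ} (f g : ℕ → ℤ)
    (h : ∀ i ∈ range m, d ∣ f i - g i) :
    d ∣ (∏ i ∈ range m, f i) - ∏ i ∈ range m, g i := by
  induction m with
  | zero => simp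
  | succ n ih =>
    rw [prod_range_succ, prod_range_succ]
    have h1 : d ∣ f n - g n := h n (by simp)
    have h2 := ih (fun i hi => h i (mem_range.mpr (Nat.lt_succ_of_lt (mem_range.mp hi))))
    have : (∏ i ∈ range n, f i) * f n - (∏ i ∈ range n, g i) * g n
        = ((∏ i ∈ range n, f i) - ∏ i ∈ range n, g i) * f n
          + (∏ i ∈ range n, g i) * (f n - g n) := by ring
    rw [this]
    exact dvd_add (Dvd.dvd.mul_right h2 _) (Dvd.dvd.mul_left h1 _)

lemma key_dvd (a : ℤ) (r m : ℕ) (hr : 1 ≤ r) :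
    (m.factorial : ℤ) ∣ (∏ i ∈ range m, (a - r * i)) * r ^ m := by
  set X : ℤ := (∏ i ∈ range m, (a - r * i)) * r ^ m with hX
  have habs : ((m.factorial : ℤ)) ∣ X ↔ m.factorial ∣ X.natAbs := by
    rw [← Int.natAbs_dvd_natAbs, Int.natAbs_natCast]
  rw [habs, Nat.dvd_iff_prime_pow_dvd_dvd]
  intro q k hq hqk
  have hq' : q.Prime := hq
  have hZ : ((q : ℤ))^k ∣ X → q ^ k ∣ X.natAbs := by
    intro h
    have h2 := Int.natAbs_dvd_natAbs.mpr h
    rw [Int.natAbs_pow, Int.natAbs_natCast] at h2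
    exact h2
  apply hZ
  by_cases hqr : q ∣ r
  · -- q divides r : q^k ∣ r^m
    have hk : k ≤ (m.factorial).factorization q :=
      (Nat.Prime.pow_dvd_iff_le_factorization hq' (Nat.factorial_ne_zero m)).mp hqk
    have hfq : Fact q.Prime := ⟨hq'⟩
    have hle : (m.factorial).factorization q ≤ m := by
      rw [Nat.factorization_def _ hq']
      have hleg := sub_one_mul_padicValNat_factorial (p := q) m
      have h2 := hq'.two_le
      have hstep : padicValNat q (m.factorial) ≤ (q-1) * padicValNat q (m.factorial) :=
        Nat.le_mul_of_pos_left _ (by omega)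
      have h3 : m - (q.digits m).sum ≤ m := Nat.sub_le _ _
      omega
    have : q ^ k ∣ r ^ m := dvd_trans (pow_dvd_pow q (le_trans hk hle))
      (pow_dvd_pow_of_dvd hqr m)
    have hcast : ((q:ℤ))^k ∣ (r:ℤ)^m := by exact_mod_cast this
    exact hcast.mul_left _
  · -- q coprime to r
    have hcop : IsCoprime (r : ℤ) ((q : ℤ) ^ k) := by
      have hn : Nat.Coprime r (q ^ k) :=
        Nat.Coprime.pow_right k (((hq'.coprime_iff_not_dvd).mpr hqr).symm)
      have h := Nat.isCoprime_iff_coprime.mpr hn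
      exact_mod_cast h
    obtain ⟨u, v, huv⟩ := hcop
    -- u * r + v * q^k = 1
    set b : ℤ := u * a with hb
    have hab : ((q:ℤ)^k) ∣ a - r * b := by
      have : a - r * b = (v * a) * (q:ℤ)^k := by
        have : (1 : ℤ) - u * r = v * (q:ℤ)^k := by linarith [huv]
        calc a - r * b = a * (1 - u * r) := by ring
          _ = (v * a) * (q:ℤ)^k := by rw [this]; ring
      exact this ▸ dvd_mul_left _ _
    have hprodmod : ((q:ℤ)^k) ∣ (∏ i ∈ range m, (a - r * i)) - ∏ i ∈ range m, ((r:ℤ) * (b - i)) := by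
      apply dvd_prod_sub
      intro i _
      have : (a - r * i) - (r:ℤ) * (b - i) = a - r * b := by ring
      rw [this]; exact hab
    have hprod2 : ((q:ℤ)^k) ∣ ∏ i ∈ range m, ((r:ℤ) * (b - i)) := by
      rw [prod_mul_distrib, prod_const]
      have h1 : ((q:ℤ)^k) ∣ (m.factorial : ℤ) := by exact_mod_cast hqk
      exact Dvd.dvd.mul_left (dvd_trans h1 (fact_dvd_prod b m)) _
    have : ((q:ℤ)^k) ∣ ∏ i ∈ range m, (a - r * i) := by
      have := dvd_add hprodmod hprod2
      simpa using this
    exact this.mul_right _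

theorem stmt_6 (p : ℕ) (hp : p.Prime) (a : ℤ) (r m : ℕ)
    (hr : 1 ≤ r) (hm : 1 ≤ m) :
    0 ≤ padicValRat p
        ((∏ i ∈ Finset.range m, ((a : ℚ) - r * i)) * r ^ m / (m.factorial : ℚ)) ∧
      ∃ z : ℤ,
        (∏ i ∈ Finset.range m, ((a : ℚ) - r * i)) * r ^ m / (m.factorial : ℚ) = z := by
  obtain ⟨z, hz⟩ := key_dvd a r m hr
  have hfac : (m.factorial : ℚ) ≠ 0 := Nat.cast_ne_zero.mpr (Nat.factorial_ne_zero m)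
  have hE : (∏ i ∈ Finset.range m, ((a : ℚ) - r * i)) * r ^ m / (m.factorial : ℚ) = (z : ℚ) := by
    have hcast : (∏ i ∈ Finset.range m, ((a : ℚ) - r * i)) * r ^ m
        = (((∏ i ∈ Finset.range m, (a - (r:ℤ) * i)) * (r:ℤ) ^ m : ℤ) : ℚ) := by
      push_cast
      ring
    rw [hcast, hz]
    push_cast
    field_simp
  refine ⟨?_, z, hE⟩
  rw [hE, padicValRat.of_int]
  exact Int.natCast_nonneg _
end

section
/- For a positive integer n, g ∈ {0,1}, and real r ≥ 2, let A_{n,g}(z) = Σ_{m=0}^{n} binomial(n−g+1/r, m)·binomial(2n−g−m, n−g)·(−z)^m. Then for all complex z with |1 − z| ≤ 1 one has |A_{n,g}(z)| ≤ binomial(2n−g, n), and for |1 − z| ≤ 2 one has |A_{n,g}(z)| ≤ 2^{3n+2}. -/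
noncomputable def gbinom (x : ℝ) (k : ℕ) : ℝ :=
  (∏ i ∈ Finset.range k, (x - i)) / (Nat.factorial k)

/-- The Padé approximation polynomial `A_{n,g}` to `(1-z)^{1/r}`. -/
noncomputable def padeA (r : ℝ) (n g : ℕ) (z : ℂ) : ℂ :=
  ∑ m ∈ Finset.range (n + 1),
    (gbinom ((n : ℝ) - g + 1 / r) m : ℂ) * (Nat.choose (2 * n - g - m) (n - g) : ℂ) * (-z) ^ m

/-- The Padé approximation polynomial `B_{n,g}` to `(1-z)^{1/r}`. -/
noncomputable def padeB (r : ℝ) (n g : ℕ) (z : ℂ) : ℂ :=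
  ∑ m ∈ Finset.range (n - g + 1),
    (gbinom ((n : ℝ) - 1 / r) m : ℂ) * (Nat.choose (2 * n - g - m) n : ℂ) * (-z) ^ m

open Finset Polynomial

lemma descPoch_smeval_real (x : ℝ) (k : ℕ) :
    (descPochhammer ℤ k).smeval x = ∏ i ∈ range k, (x - i) := by
  induction k with
  | zero => simp [descPochhammer_zero, Polynomial.smeval_one]
  | succ k ih =>
      rw [descPochhammer_succ_right, Polynomial.smeval_mul, ih, prod_range_succ,
        Polynomial.smeval_sub, Polynomial.smeval_X, Polynomial.smeval_natCast]
      ring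

lemma gbinom_eq_ringChoose (x : ℝ) (k : ℕ) : gbinom x k = Ring.choose x k := by
  have h := Ring.descPochhammer_eq_factorial_smul_choose x k
  rw [descPoch_smeval_real] at h
  rw [gbinom, h, nsmul_eq_mul]
  field_simp [Nat.factorial_ne_zero]

lemma gbinom_vandermonde (a b : ℝ) (N : ℕ) :
    ∑ j ∈ range (N + 1), gbinom a j * gbinom b (N - j) = gbinom (a + b) N := by
  simp only [gbinom_eq_ringChoose]
  rw [Ring.add_choose_eq N (Commute.all a b),
    Finset.Nat.sum_antidiagonal_eq_sum_range_succ_mk]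

lemma gbinom_mul_choose (a : ℝ) {m k : ℕ} (h : m ≤ k) :
    gbinom a k * (Nat.choose k m : ℝ) = gbinom a m * gbinom (a - m) (k - m) := by
  have h2 := Ring.choose_smul_choose a h
  simp only [gbinom_eq_ringChoose, nsmul_eq_mul] at h2 ⊢
  rw [mul_comm, h2]

lemma gbinom_natCast (N k : ℕ) : gbinom (N : ℝ) k = (Nat.choose N k : ℝ) := by
  rw [gbinom_eq_ringChoose, Ring.choose_natCast]

lemma gbinom_nonneg {x : ℝ} {k : ℕ} (h : ∀ i < k, (0:ℝ) ≤ x - i) : 0 ≤ gbinom x k := by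
  apply div_nonneg
  · exact Finset.prod_nonneg fun i hi => h i (mem_range.mp hi)
  · positivity

lemma padeA_eq (r : ℝ) (n g : ℕ) (hn : 1 ≤ n) (hg : g ≤ 1) (z : ℂ) :
    (∑ m ∈ Finset.range (n + 1),
      (gbinom ((n : ℝ) - g + 1 / r) m : ℂ) * (Nat.choose (2 * n - g - m) (n - g) : ℂ) * (-z) ^ m)
    = ∑ k ∈ range (n + 1),
      ((gbinom ((n : ℝ) - g + 1 / r) k * gbinom ((n : ℝ) - 1 / r) (n - k) : ℝ) : ℂ)
        * (1 - z) ^ k := by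
  set a : ℝ := (n : ℝ) - g + 1 / r with ha
  set b : ℝ := (n : ℝ) - 1 / r with hb
  have hexp : ∀ k ∈ range (n + 1),
      ((gbinom a k * gbinom b (n - k) : ℝ) : ℂ) * (1 - z) ^ k
      = ∑ m ∈ range (n + 1),
        ((gbinom a k * gbinom b (n - k) : ℝ) : ℂ) * ((Nat.choose k m : ℂ) * (-z) ^ m) := by
    intro k hk
    rw [← Finset.mul_sum]
    congr 1
    have h1 : (1 : ℂ) - z = -z + 1 := by ring
    rw [h1, add_pow]
    rw [Finset.sum_subset (Finset.range_subset_range.mpr (Nat.succ_le_succ (mem_range_succ_iff.mp hk)))]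
    · exact Finset.sum_congr rfl fun m hm => by ring
    · intro m _ hm
      rw [Nat.choose_eq_zero_of_lt (by simpa using hm)]
      simp
  rw [Finset.sum_congr rfl hexp, Finset.sum_comm]
  refine Finset.sum_congr rfl fun m hm => ?_
  have hmn : m ≤ n := mem_range_succ_iff.mp hm
  -- reduce to a real identity
  have key : ∑ k ∈ range (n + 1), gbinom a k * gbinom b (n - k) * (Nat.choose k m : ℝ)
      = gbinom a m * (Nat.choose (2 * n - g - m) (n - g) : ℝ) := by
    rw [Finset.range_eq_Ico, ← Finset.sum_Ico_consecutive _ (Nat.zero_le m)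
      (by omega : m ≤ n + 1)]
    have hzero : ∑ k ∈ Finset.Ico 0 m, gbinom a k * gbinom b (n - k) * (Nat.choose k m : ℝ)
        = 0 := by
      apply Finset.sum_eq_zero
      intro k hk
      rw [Nat.choose_eq_zero_of_lt (Finset.mem_Ico.mp hk).2]
      simp
    rw [hzero, zero_add, Finset.sum_Ico_eq_sum_range]
    have hrw : ∀ j ∈ range (n + 1 - m),
        gbinom a (m + j) * gbinom b (n - (m + j)) * (Nat.choose (m + j) m : ℝ)
        = gbinom a m * (gbinom (a - m) j * gbinom b ((n - m) - j)) := by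
      intro j hj
      have h1 : gbinom a (m + j) * (Nat.choose (m + j) m : ℝ)
          = gbinom a m * gbinom (a - m) j := by
        have := gbinom_mul_choose a (Nat.le_add_right m j)
        simpa using this
      have h2 : n - (m + j) = (n - m) - j := by omega
      rw [h2]
      calc gbinom a (m + j) * gbinom b (n - m - j) * (Nat.choose (m + j) m : ℝ)
          = gbinom a (m + j) * (Nat.choose (m + j) m : ℝ) * gbinom b (n - m - j) := by ring
        _ = gbinom a m * gbinom (a - m) j * gbinom b (n - m - j) := by rw [h1]
        _ = gbinom a m * (gbinom (a - m) j * gbinom b (n - m - j)) := by ring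
    rw [Finset.sum_congr rfl hrw, ← Finset.mul_sum]
    have hN : n + 1 - m = (n - m) + 1 := by omega
    rw [hN, gbinom_vandermonde]
    congr 1
    have hcast : a - (m : ℝ) + b = ((2 * n - g - m : ℕ) : ℝ) := by
      have : ((2 * n - g - m : ℕ) : ℝ) = 2 * (n : ℝ) - g - m := by
        push_cast [Nat.cast_sub (by omega : m ≤ 2 * n - g), Nat.cast_sub (by omega : g ≤ 2 * n)]
        ring
      rw [this, ha, hb]; ring
    rw [show a - (m:ℝ) + b = a - (m:ℝ) + b from rfl]
    calc gbinom (a - m + b) (n - m) = gbinom ((2 * n - g - m : ℕ) : ℝ) (n - m) := by rw [hcast]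
      _ = (Nat.choose (2 * n - g - m) (n - m) : ℝ) := gbinom_natCast _ _
      _ = (Nat.choose (2 * n - g - m) (n - g) : ℝ) := by
          congr 1
          have h1 : n - m ≤ 2 * n - g - m := by omega
          have := Nat.choose_symm h1
          rw [show 2 * n - g - m - (n - m) = n - g by omega] at this
          exact this.symm
  calc (gbinom a m : ℂ) * (Nat.choose (2 * n - g - m) (n - g) : ℂ) * (-z) ^ m
      = (((gbinom a m * (Nat.choose (2 * n - g - m) (n - g) : ℝ)) : ℝ) : ℂ) * (-z) ^ m := by
        push_cast; ring
    _ = ∑ k ∈ range (n + 1),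
        ((gbinom a k * gbinom b (n - k) : ℝ) : ℂ) * ((Nat.choose k m : ℂ) * (-z) ^ m) := by
        rw [← key]
        push_cast
        rw [Finset.sum_mul]
        exact Finset.sum_congr rfl fun k _ => by ring

theorem stmt_10 (r : ℝ) (hr : 2 ≤ r) (n g : ℕ) (hn : 1 ≤ n) (hg : g ≤ 1) (z : ℂ) :
    (‖1 - z‖ ≤ 1 → ‖padeA r n g z‖ ≤ (Nat.choose (2 * n - g) n : ℝ)) ∧
    (‖1 - z‖ ≤ 2 → ‖padeA r n g z‖ ≤ 2 ^ (3 * n + 2)) := by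
  have hr0 : (0:ℝ) < r := lt_of_lt_of_le two_pos hr
  have h1r : (0:ℝ) < 1 / r := by positivity
  have h1r2 : 1 / r ≤ 1 / 2 := by
    apply one_div_le_one_div_of_le <;> linarith
  have hg' : (g:ℝ) ≤ 1 := by exact_mod_cast hg
  set a : ℝ := (n : ℝ) - g + 1 / r with ha
  set b : ℝ := (n : ℝ) - 1 / r with hb
  have hAnn : ∀ k ≤ n, 0 ≤ gbinom a k := by
    intro k hk
    apply gbinom_nonneg
    intro i hi
    have hin : (i:ℝ) + 1 ≤ (n:ℝ) := by exact_mod_cast Nat.lt_of_lt_of_le hi hk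
    rw [ha]; linarith
  have hBnn : ∀ k ≤ n, 0 ≤ gbinom b k := by
    intro k hk
    apply gbinom_nonneg
    intro i hi
    have hin : (i:ℝ) + 1 ≤ (n:ℝ) := by exact_mod_cast Nat.lt_of_lt_of_le hi hk
    rw [hb]; linarith
  have hEnn : ∀ k ∈ Finset.range (n + 1), 0 ≤ gbinom a k * gbinom b (n - k) :=
    fun k hk => mul_nonneg (hAnn k (Finset.mem_range_succ_iff.mp hk))
      (hBnn (n - k) (Nat.sub_le n k))
  have hsum : ∑ k ∈ range (n + 1), gbinom a k * gbinom b (n - k)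
      = (Nat.choose (2 * n - g) n : ℝ) := by
    rw [gbinom_vandermonde]
    have hcast : a + b = ((2 * n - g : ℕ) : ℝ) := by
      rw [Nat.cast_sub (by omega : g ≤ 2 * n), ha, hb]
      push_cast; ring
    rw [hcast, gbinom_natCast]
  have habs : ∀ c : ℝ, 1 ≤ c → ‖1 - z‖ ≤ c →
      ‖padeA r n g z‖ ≤ (Nat.choose (2 * n - g) n : ℝ) * c ^ n := by
    intro c hc hzc
    have hc0 : (0:ℝ) ≤ c := le_trans zero_le_one hc
    rw [padeA, padeA_eq r n g hn hg z]
    calc ‖∑ k ∈ range (n + 1),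
            ((gbinom a k * gbinom b (n - k) : ℝ) : ℂ) * (1 - z) ^ k‖
        ≤ ∑ k ∈ range (n + 1),
            ‖((gbinom a k * gbinom b (n - k) : ℝ) : ℂ) * (1 - z) ^ k‖ :=
          norm_sum_le _ _
      _ ≤ ∑ k ∈ range (n + 1), gbinom a k * gbinom b (n - k) * c ^ n := by
          apply Finset.sum_le_sum
          intro k hk
          rw [norm_mul, norm_pow, Complex.norm_real, Real.norm_eq_abs, abs_of_nonneg (hEnn k hk)]
          apply mul_le_mul_of_nonneg_left _ (hEnn k hk)
          calc ‖1 - z‖ ^ k ≤ c ^ k :=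
                pow_le_pow_left₀ (norm_nonneg _) hzc k
            _ ≤ c ^ n := pow_le_pow_right₀ hc (Finset.mem_range_succ_iff.mp hk)
      _ = (Nat.choose (2 * n - g) n : ℝ) * c ^ n := by rw [← Finset.sum_mul, hsum]
  constructor
  · intro hz
    have := habs 1 le_rfl hz
    simpa using this
  · intro hz
    have h2 := habs 2 one_le_two hz
    have hcle : (Nat.choose (2 * n - g) n : ℝ) ≤ 2 ^ (2 * n) := by
      have hle : Nat.choose (2 * n - g) n ≤ 2 ^ (2 * n - g) := by
        calc Nat.choose (2 * n - g) n
            ≤ ∑ i ∈ range (2 * n - g + 1), Nat.choose (2 * n - g) i :=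
              Finset.single_le_sum (fun i _ => Nat.zero_le _)
                (Finset.mem_range_succ_iff.mpr (by omega))
          _ = 2 ^ (2 * n - g) := Nat.sum_range_choose _
      calc (Nat.choose (2 * n - g) n : ℝ) ≤ ((2 ^ (2 * n - g) : ℕ) : ℝ) := by exact_mod_cast hle
        _ ≤ ((2 ^ (2 * n) : ℕ) : ℝ) := by
            exact_mod_cast Nat.pow_le_pow_right (by norm_num) (by omega)
        _ = 2 ^ (2 * n) := by push_cast; ring
    calc ‖padeA r n g z‖ ≤ (Nat.choose (2 * n - g) n : ℝ) * 2 ^ n := h2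
      _ ≤ 2 ^ (2 * n) * 2 ^ n := by
          apply mul_le_mul_of_nonneg_right hcle (by positivity)
      _ = 2 ^ (3 * n) := by rw [← pow_add]; ring_nf
      _ ≤ 2 ^ (3 * n + 2) := pow_le_pow_right₀ one_le_two (by omega)
end

section
/- Let r ≥ 2, n ≥ 1 be integers, g ∈ {0,1}, and define A_{n,g}(z) = Σ_{m=0}^{n} binomial(n−g+1/r, m)·binomial(2n−g−m, n−g)·(−z)^m and B_{n,g}(z) = Σ_{m=0}^{n−g} binomial(n−1/r, m)·binomial(2n−g−m, n)·(−z)^m. Then there is a power series F_{n,g}(z), convergent for |z| < 1, such that A_{n,g}(z) − (1−z)^{1/r}·B_{n,g}(z) = z^{2n+1−g}·F_{n,g}(z) for all |z| < 1, where (1−z)^{1/r} is the principal branch. -/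
/-! ### Auxiliary lemmas -/

lemma gbinom_zero (x : ℝ) : gbinom x 0 = 1 := by
  simp [gbinom]

lemma gbinom_succ (x : ℝ) (k : ℕ) : gbinom x (k + 1) = gbinom x k * (x - k) / (k + 1) := by
  unfold gbinom
  rw [Finset.prod_range_succ, Nat.factorial_succ]
  have h1 : ((k : ℝ) + 1) ≠ 0 := by positivity
  have h2 : (Nat.factorial k : ℝ) ≠ 0 := Nat.cast_ne_zero.mpr (Nat.factorial_ne_zero k)
  push_cast
  simp only [div_eq_mul_inv, mul_inv]
  ring

lemma choose_nat_id (N k : ℕ) :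
    Nat.choose (N + 1) k * (N + 1 - k) = (N + 1) * Nat.choose N k := by
  have h1 := Nat.choose_succ_right_eq (N + 1) k
  have h2 := Nat.add_one_mul_choose_eq N k
  omega

lemma choose_real_id (N k : ℕ) (hN : 1 ≤ N) :
    ((N : ℝ) - k) * (Nat.choose N k : ℝ) = (N : ℝ) * (Nat.choose (N - 1) k : ℝ) := by
  obtain ⟨M, rfl⟩ : ∃ M, N = M + 1 := ⟨N - 1, by omega⟩
  rcases le_or_gt k (M + 1) with hk | hk
  · have h := choose_nat_id M k
    have hc : ((M + 1 - k : ℕ) : ℝ) = (M + 1 : ℕ) - (k : ℝ) := by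
      push_cast [Nat.cast_sub hk]; ring
    have := congrArg (fun t : ℕ => (t : ℝ)) h
    push_cast [Nat.cast_sub hk] at this
    simp only [Nat.add_sub_cancel]
    push_cast
    nlinarith [this]
  · rw [Nat.choose_eq_zero_of_lt hk, Nat.choose_eq_zero_of_lt (by omega : M + 1 - 1 < k)]
    simp

/-- the hypergeometric summand -/
noncomputable def tt (x : ℝ) (n g j m : ℕ) : ℝ :=
  gbinom ((n : ℝ) - x) m * (Nat.choose (2 * n - g - m) n : ℝ) * gbinom x (j - m)

/-- the WZ certificate -/
noncomputable def WW (x : ℝ) (n g k m : ℕ) : ℝ :=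
  (m : ℝ) * (2 * (n : ℝ) - g + 1 - m) * gbinom ((n : ℝ) - x) m *
    (Nat.choose (2 * n - g - m) n : ℝ) * gbinom x (k + 1 - m)

lemma cert (x : ℝ) (n g k m : ℕ) (hm : m ≤ k) (hk : k + 1 + g ≤ 2 * n) :
    ((n : ℝ) - g + x - k) * ((n : ℝ) - k) * tt x n g k m
      - ((k : ℝ) + 1) * (2 * (n : ℝ) - g - k) * tt x n g (k + 1) m
    = WW x n g k (m + 1) - WW x n g k m := by
  have hmk : ((k - m : ℕ) : ℝ) = (k : ℝ) - m := by
    push_cast [Nat.cast_sub hm]; ring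
  have e1 : k + 1 - m = (k - m) + 1 := by omega
  have e2 : k + 1 - (m + 1) = k - m := by omega
  have hb1 : gbinom x (k + 1 - m)
      = gbinom x (k - m) * (x - ((k : ℝ) - m)) / ((k : ℝ) - m + 1) := by
    rw [e1, gbinom_succ, hmk]
  have ha : gbinom ((n : ℝ) - x) (m + 1)
      = gbinom ((n : ℝ) - x) m * ((n : ℝ) - x - m) / ((m : ℝ) + 1) := by
    rw [gbinom_succ]
  have hN1 : 1 ≤ 2 * n - g - m := by omega
  have hNc : ((2 * n - g - m : ℕ) : ℝ) = 2 * (n : ℝ) - g - m := by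
    have e : 2 * n - g - m = 2 * n - (g + m) := by omega
    rw [e, Nat.cast_sub (by omega : g + m ≤ 2 * n)]
    push_cast; ring
  have hne : (2 * (n : ℝ) - g - m) ≠ 0 := by
    rw [← hNc]
    exact Nat.cast_ne_zero.mpr (by omega)
  have hcc : (Nat.choose (2 * n - g - (m + 1)) n : ℝ)
      = ((n : ℝ) - g - m) * (Nat.choose (2 * n - g - m) n : ℝ) / (2 * (n : ℝ) - g - m) := by
    have h := choose_real_id (2 * n - g - m) n hN1
    have e3 : 2 * n - g - m - 1 = 2 * n - g - (m + 1) := by omega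
    rw [e3, hNc] at h
    rw [eq_div_iff hne]
    linear_combination -h
  have hm1 : ((m : ℝ) + 1) ≠ 0 := by positivity
  have hk1 : ((k : ℝ) - m + 1) ≠ 0 := by
    have : (m : ℝ) ≤ k := Nat.cast_le.mpr hm
    nlinarith
  simp only [tt, WW, e2, hb1, ha, hcc]
  push_cast
  have hne' : (n : ℝ) * 2 - g - m ≠ 0 := by rw [mul_comm]; exact hne
  field_simp
  ring

noncomputable def LL (x : ℝ) (n g k : ℕ) : ℝ := ∑ m ∈ Finset.range (k + 1), tt x n g k m

noncomputable def TT (x : ℝ) (n g k : ℕ) : ℝ :=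
  gbinom ((n : ℝ) - g + x) k * (Nat.choose (2 * n - g - k) (n - g) : ℝ)

lemma key (x : ℝ) (n g : ℕ) (hg : g ≤ n) : ∀ k, k + g ≤ 2 * n → LL x n g k = TT x n g k := by
  intro k
  induction k with
  | zero =>
    intro _
    simp only [LL, TT, zero_add, Finset.sum_range_one, tt, Nat.sub_zero, Nat.sub_self,
      gbinom_zero, one_mul, mul_one]
    have h := Nat.choose_symm (show n ≤ 2 * n - g by omega)
    have e : 2 * n - g - n = n - g := by omega
    rw [e] at h
    rw [← h]
  | succ k ih =>
    intro hk1
    have hL := ih (by omega)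
    have htel : ∑ m ∈ Finset.range (k + 1), (WW x n g k (m + 1) - WW x n g k m)
        = WW x n g k (k + 1) - WW x n g k 0 := Finset.sum_range_sub (WW x n g k) (k + 1)
    have hsum : ∑ m ∈ Finset.range (k + 1),
        (((n : ℝ) - g + x - k) * ((n : ℝ) - k) * tt x n g k m
          - ((k : ℝ) + 1) * (2 * (n : ℝ) - g - k) * tt x n g (k + 1) m)
        = WW x n g k (k + 1) - WW x n g k 0 := by
      rw [← htel]
      refine Finset.sum_congr rfl (fun m hm => ?_)
      exact cert x n g k m (by have := Finset.mem_range.mp hm; omega) (by omega)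
    have hW0 : WW x n g k 0 = 0 := by simp [WW]
    have hWk : WW x n g k (k + 1)
        = ((k : ℝ) + 1) * (2 * (n : ℝ) - g - k) * tt x n g (k + 1) (k + 1) := by
      simp only [WW, tt, Nat.sub_self, gbinom_zero, mul_one]
      push_cast
      ring
    rw [Finset.sum_sub_distrib, hW0, sub_zero, hWk, ← Finset.mul_sum, ← Finset.mul_sum] at hsum
    -- choose contiguity for T
    have hN1 : 1 ≤ 2 * n - g - k := by omega
    have hNc : ((2 * n - g - k : ℕ) : ℝ) = 2 * (n : ℝ) - g - k := by
      have e : 2 * n - g - k = 2 * n - (g + k) := by omega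
      rw [e, Nat.cast_sub (by omega : g + k ≤ 2 * n)]
      push_cast; ring
    have hne : (2 * (n : ℝ) - g - k) ≠ 0 := by
      rw [← hNc]
      exact Nat.cast_ne_zero.mpr (by omega)
    have hng : ((n - g : ℕ) : ℝ) = (n : ℝ) - g := by
      rw [Nat.cast_sub hg]
    have hch := choose_real_id (2 * n - g - k) (n - g) hN1
    have e3 : 2 * n - g - k - 1 = 2 * n - g - (k + 1) := by omega
    rw [e3, hNc, hng] at hch
    -- hch : (2n-g-k - (n-g)) * C(2n-g-k, n-g) = (2n-g-k) * C(2n-g-(k+1), n-g)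
    have hk1' : ((k : ℝ) + 1) ≠ 0 := by positivity
    have hch' : ((n : ℝ) - k) * ((2 * n - g - k).choose (n - g) : ℝ)
        = (2 * (n : ℝ) - g - k) * ((2 * n - g - (k + 1)).choose (n - g) : ℝ) := by
      linear_combination hch
    have hgs' : gbinom ((n : ℝ) - g + x) (k + 1) * ((k : ℝ) + 1)
        = gbinom ((n : ℝ) - g + x) k * ((n : ℝ) - g + x - k) := by
      rw [gbinom_succ]; field_simp
    have hT : ((n : ℝ) - g + x - k) * ((n : ℝ) - k) * TT x n g k
        = ((k : ℝ) + 1) * (2 * (n : ℝ) - g - k) * TT x n g (k + 1) := by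
      simp only [TT]
      linear_combination (((n : ℝ) - g + x - k) * gbinom ((n : ℝ) - g + x) k) * hch'
        - (2 * (n : ℝ) - g - k) * (((2 * n - g - (k + 1)).choose (n - g) : ℝ)) * hgs' 
    have hp : ((k : ℝ) + 1) * (2 * (n : ℝ) - g - k) ≠ 0 := mul_ne_zero hk1' hne
    apply mul_left_cancel₀ hp
    have hLL : LL x n g (k + 1)
        = (∑ m ∈ Finset.range (k + 1), tt x n g (k + 1) m) + tt x n g (k + 1) (k + 1) :=
      Finset.sum_range_succ _ _
    calc ((k : ℝ) + 1) * (2 * (n : ℝ) - g - k) * LL x n g (k + 1)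
        = ((n : ℝ) - g + x - k) * ((n : ℝ) - k) * LL x n g k := by
          rw [hLL, LL]; linear_combination -hsum
      _ = ((n : ℝ) - g + x - k) * ((n : ℝ) - k) * TT x n g k := by rw [hL]
      _ = ((k : ℝ) + 1) * (2 * (n : ℝ) - g - k) * TT x n g (k + 1) := hT

lemma hasDerivAt_cpow_one_sub (c : ℂ) {w : ℂ} (hw : ‖w‖ < 1) :
    HasDerivAt (fun z : ℂ => (1 - z) ^ c) (-(c * (1 - w) ^ (c - 1))) w := by
  have hre : 0 < (1 - w).re := by
    have h1 := Complex.abs_re_le_norm w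
    simp only [Complex.sub_re, Complex.one_re]
    have : |w.re| < 1 := lt_of_le_of_lt h1 hw
    have := (abs_lt.mp this).2
    linarith
  have h1 : HasDerivAt (fun z : ℂ => 1 - z) (-1) w := by
    simpa using (hasDerivAt_id w).const_sub 1
  have h0 : (1 - w) ∈ Complex.slitPlane := Complex.mem_slitPlane_iff.mpr (Or.inl hre)
  have := h1.cpow_const (c := c) h0
  convert this using 1
  ring

lemma iteratedDeriv_one_sub_cpow (x : ℂ) (k : ℕ) :
    ∀ w : ℂ, ‖w‖ < 1 →
    iteratedDeriv k (fun z : ℂ => (1 - z) ^ x) w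
      = (-1) ^ k * (∏ i ∈ Finset.range k, (x - i)) * (1 - w) ^ (x - k) := by
  induction k with
  | zero =>
    intro w _
    simp [iteratedDeriv_zero]
  | succ k ih =>
    intro w hw
    have hopen : Metric.ball (0 : ℂ) 1 ∈ nhds w := by
      refine Metric.isOpen_ball.mem_nhds ?_
      simpa [Metric.mem_ball, Complex.dist_eq] using hw
    have heq : iteratedDeriv k (fun z : ℂ => (1 - z) ^ x)
        =ᶠ[nhds w] fun z => (-1) ^ k * (∏ i ∈ Finset.range k, (x - i)) * (1 - z) ^ (x - k) := by
      filter_upwards [hopen] with z hz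
      exact ih z (by simpa [Metric.mem_ball, Complex.dist_eq] using hz)
    rw [iteratedDeriv_succ, heq.deriv_eq]
    have hd := (hasDerivAt_cpow_one_sub (x - k) hw).const_mul
      ((-1 : ℂ) ^ k * (∏ i ∈ Finset.range k, (x - i)))
    rw [hd.deriv]
    rw [Finset.prod_range_succ]
    push_cast
    rw [show x - (k : ℂ) - 1 = x - ((k : ℂ) + 1) by ring]
    ring

lemma hasSum_binomial (x : ℝ) {z : ℂ} (hz : ‖z‖ < 1) :
    HasSum (fun k => ((gbinom x k : ℝ) : ℂ) * (-z) ^ k) ((1 - z) ^ (x : ℂ)) := by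
  have hdiff : DifferentiableOn ℂ (fun w : ℂ => (1 - w) ^ (x : ℂ)) (Metric.ball 0 1) := by
    intro w hw
    exact (hasDerivAt_cpow_one_sub (x : ℂ)
      (by simpa [Metric.mem_ball, Complex.dist_eq] using hw)).differentiableAt.differentiableWithinAt
  have H := Complex.hasSum_taylorSeries_on_ball hdiff
    (by simpa [Metric.mem_ball, Complex.dist_eq] using hz)
  have hzero : ‖(0 : ℂ)‖ < 1 := by simp
  convert H using 2 with k
  · rfl
  rw [iteratedDeriv_one_sub_cpow (x : ℂ) k 0 hzero]
  rw [show (1 : ℂ) - 0 = 1 by ring, Complex.one_cpow]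
  simp only [smul_eq_mul, sub_zero, mul_one]
  rw [gbinom]
  push_cast
  have hfac : ((Nat.factorial k : ℝ) : ℂ) ≠ 0 := by
    exact_mod_cast Nat.cast_ne_zero.mpr (Nat.factorial_ne_zero k)
  rw [neg_pow z]
  field_simp

theorem stmt_11 (r n g : ℕ) (hr : 2 ≤ r) (hn : 1 ≤ n) (hg : g ≤ 1) :
    ∃ c : ℕ → ℂ, ∀ z : ℂ, ‖z‖ < 1 →
      ∃ s : ℂ, HasSum (fun k => c k * z ^ k) s ∧
        padeA r n g z - (1 - z) ^ ((1 : ℂ) / r) * padeB r n g z = z ^ (2 * n + 1 - g) * s := by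
  set x : ℝ := 1 / (r : ℝ) with hxdef
  have hgn : g ≤ n := le_trans hg hn
  set β : ℕ → ℂ := fun m => ((gbinom ((n : ℝ) - x) m : ℝ) : ℂ)
    * (Nat.choose (2 * n - g - m) n : ℂ) * (-1) ^ m with hβdef
  set α : ℕ → ℂ := fun j => if j ≤ n then ((gbinom ((n : ℝ) - g + x) j : ℝ) : ℂ)
    * (Nat.choose (2 * n - g - j) (n - g) : ℂ) * (-1) ^ j else 0 with hαdef
  set d : ℕ → ℂ := fun j => ∑ m ∈ Finset.range (n - g + 1),
    if m ≤ j then β m * (((gbinom x (j - m) : ℝ) : ℂ) * (-1) ^ (j - m)) else 0 with hddef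
  set N : ℕ := 2 * n + 1 - g with hNdef
  have hNpos : 1 ≤ N := by omega
  refine ⟨fun k => α (k + N) - d (k + N), fun z hz => ?_⟩
  have hxc : ((x : ℝ) : ℂ) = (1 : ℂ) / (r : ℂ) := by
    rw [hxdef]; push_cast; ring
  have hS : HasSum (fun j => ((gbinom x j : ℝ) : ℂ) * (-z) ^ j) ((1 - z) ^ ((1 : ℂ) / (r:ℂ))) := by
    rw [← hxc]; exact hasSum_binomial x hz
  -- A as a power series
  have hA : HasSum (fun j => α j * z ^ j) (padeA (r : ℝ) n g z) := by
    have h1 : ∀ j ∉ Finset.range (n + 1), α j * z ^ j = 0 := by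
      intro j hj
      have hjn : ¬ j ≤ n := by
        intro h; exact hj (Finset.mem_range.mpr (by omega))
      simp [hαdef, hjn]
    have h2 := hasSum_sum_of_ne_finset_zero (L := SummationFilter.unconditional ℕ) h1
    convert h2 using 1
    rw [padeA]
    refine Finset.sum_congr rfl fun j hj => ?_
    have hjn : j ≤ n := by have := Finset.mem_range.mp hj; omega
    simp only [hαdef, if_pos hjn]
    rw [neg_pow z, ← hxdef]
    ring
  -- each B-term times the binomial series
  have hBm : ∀ m : ℕ, HasSum
      (fun j => if m ≤ j then β m * (((gbinom x (j - m) : ℝ) : ℂ) * (-1) ^ (j - m)) * z ^ j else 0)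
      (β m * z ^ m * ((1 - z) ^ ((1 : ℂ) / (r:ℂ)))) := by
    intro m
    have hinj : Function.Injective (fun j : ℕ => j + m) := add_left_injective m
    have hz0 : ∀ j ∉ Set.range (fun j : ℕ => j + m),
        (if m ≤ j then β m * (((gbinom x (j - m) : ℝ) : ℂ) * (-1) ^ (j - m)) * z ^ j else 0) = 0 := by
      intro j hj
      have : ¬ m ≤ j := by
        intro hle
        exact hj ⟨j - m, by simpa using Nat.sub_add_cancel hle⟩
      simp [this]
    rw [← Function.Injective.hasSum_iff hinj hz0]
    have h := hS.mul_left (β m * z ^ m)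
    have hfun : ((fun j => if m ≤ j then β m * (((gbinom x (j - m) : ℝ) : ℂ) * (-1) ^ (j - m)) * z ^ j else 0)
        ∘ (fun j : ℕ => j + m))
        = fun j => (β m * z ^ m) * (((gbinom x j : ℝ) : ℂ) * (-z) ^ j) := by
      funext j
      simp only [Function.comp_apply, if_pos (Nat.le_add_left m j), Nat.add_sub_cancel]
      rw [pow_add, neg_pow z]
      ring
    rw [hfun]
    exact h
  -- B series
  have hBsum : HasSum (fun j => d j * z ^ j)
      ((1 - z) ^ ((1 : ℂ) / (r:ℂ)) * padeB (r : ℝ) n g z) := by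
    have h := hasSum_sum (s := Finset.range (n - g + 1)) (fun m _ => hBm m)
    convert h using 1
    · funext j
      simp only [hddef, Finset.sum_mul]
      refine Finset.sum_congr rfl fun m _ => ?_
      split_ifs with h'
      · ring
      · simp
    · rw [padeB, Finset.mul_sum]
      refine Finset.sum_congr rfl fun m _ => ?_
      simp only [hβdef]
      rw [neg_pow z, ← hxdef]
      ring
  have hF : HasSum (fun j => (α j - d j) * z ^ j)
      (padeA (r : ℝ) n g z - (1 - z) ^ ((1 : ℂ) / (r:ℂ)) * padeB (r : ℝ) n g z) := by
    have := hA.sub hBsum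
    convert this using 1
    · rfl
    funext j
    ring
  -- vanishing of low-order coefficients
  have hvan : ∀ j, j < N → α j - d j = 0 := by
    intro j hjN
    have hj' : j + g ≤ 2 * n := by omega
    have hkey := key x n g hgn j hj'
    have hαT : α j = ((TT x n g j : ℝ) : ℂ) * (-1) ^ j := by
      by_cases hjn : j ≤ n
      · simp only [hαdef, if_pos hjn, TT]
        push_cast
        ring
      · simp only [hαdef, if_neg hjn]
        have hlt : 2 * n - g - j < n - g := by omega
        rw [TT, Nat.choose_eq_zero_of_lt hlt]
        simp
    have hd1 : d j = ∑ m ∈ Finset.range (2 * n + 2),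
        if m ≤ j then β m * (((gbinom x (j - m) : ℝ) : ℂ) * (-1) ^ (j - m)) else 0 := by
      rw [hddef]
      refine Finset.sum_subset (Finset.range_subset_range.mpr (by omega)) ?_
      intro m _ hm2
      have hmg : n - g < m := by
        by_contra h
        exact hm2 (Finset.mem_range.mpr (by omega))
      split_ifs with hmj
      · have hc0 : Nat.choose (2 * n - g - m) n = 0 :=
          Nat.choose_eq_zero_of_lt (by omega)
        simp [hβdef, hc0]
      · rfl
    have hL1 : ((LL x n g j : ℝ) : ℂ) = ∑ m ∈ Finset.range (2 * n + 2),
        if m ≤ j then ((tt x n g j m : ℝ) : ℂ) else 0 := by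
      rw [LL]
      push_cast
      rw [show (∑ m ∈ Finset.range (j + 1), ((tt x n g j m : ℝ) : ℂ))
          = ∑ m ∈ Finset.range (j + 1), (if m ≤ j then ((tt x n g j m : ℝ) : ℂ) else 0) from
        Finset.sum_congr rfl fun m hm =>
          (if_pos (by have := Finset.mem_range.mp hm; omega)).symm]
      refine Finset.sum_subset (Finset.range_subset_range.mpr (by omega)) ?_
      intro m _ hm2
      have : ¬ m ≤ j := by
        intro h
        exact hm2 (Finset.mem_range.mpr (by omega))
      simp [this]
    have hdL : d j = ((LL x n g j : ℝ) : ℂ) * (-1) ^ j := by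
      rw [hd1, hL1, Finset.sum_mul]
      refine Finset.sum_congr rfl fun m _ => ?_
      split_ifs with hmj
      · have hsgn : ((-1 : ℂ)) ^ m * (-1) ^ (j - m) = (-1) ^ j := by
          rw [← pow_add]; congr 1; omega
        simp only [hβdef, tt]
        push_cast
        linear_combination (((gbinom ((n : ℝ) - x) m : ℝ) : ℂ)
          * ((2 * n - g - m).choose n : ℂ) * ((gbinom x (j - m) : ℝ) : ℂ)) * hsgn
      · simp
    rw [hαT, hdL, hkey]
    ring
  -- shifted series
  have hinjN : Function.Injective (fun k : ℕ => k + N) := add_left_injective N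
  have hzeroN : ∀ j ∉ Set.range (fun k : ℕ => k + N), (α j - d j) * z ^ j = 0 := by
    intro j hj
    have hjN : j < N := by
      by_contra h
      exact hj ⟨j - N, by simpa using Nat.sub_add_cancel (by omega : N ≤ j)⟩
    rw [hvan j hjN, zero_mul]
  have hshift : HasSum (fun k => (α (k + N) - d (k + N)) * z ^ (k + N))
      (padeA (r : ℝ) n g z - (1 - z) ^ ((1 : ℂ) / (r:ℂ)) * padeB (r : ℝ) n g z) :=
    (Function.Injective.hasSum_iff hinjN hzeroN).mpr hF
  by_cases hz0 : z = 0
  · subst hz0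
    refine ⟨α (0 + N) - d (0 + N), ?_, ?_⟩
    · have := hasSum_single (f := fun k => (α (k + N) - d (k + N)) * (0:ℂ) ^ k) 0
        (fun b hb => by simp [zero_pow hb])
      simpa using this
    · have h0 : padeA (r : ℝ) n g 0 - (1 - 0) ^ ((1 : ℂ) / (r:ℂ)) * padeB (r : ℝ) n g 0 = 0 := by
        refine hF.unique ?_
        have hfun : (fun j => (α j - d j) * (0:ℂ) ^ j) = fun _ => 0 := by
          funext j
          rcases Nat.eq_zero_or_pos j with rfl | hj
          · rw [hvan 0 (by omega)]; simp
          · rw [zero_pow (by omega)]; ring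
        rw [hfun]
        exact hasSum_zero
      rw [h0, zero_pow (by omega : N ≠ 0), zero_mul]
  · have hzN : z ^ N ≠ 0 := pow_ne_zero N hz0
    refine ⟨(padeA (r : ℝ) n g z - (1 - z) ^ ((1 : ℂ) / (r:ℂ)) * padeB (r : ℝ) n g z) / z ^ N,
      ?_, ?_⟩
    · have h := hshift.div_const (z ^ N)
      have hfun : (fun k => (α (k + N) - d (k + N)) * z ^ (k + N) / z ^ N)
          = fun k => (α (k + N) - d (k + N)) * z ^ k := by
        funext k
        rw [pow_add]
        field_simp
      rw [hfun] at h
      exact h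
    · rw [mul_comm (z ^ N), div_mul_cancel₀ _ hzN]
end

section
/- Let ω be a complex number with |ω| = 1 and let w be a nonzero complex number with w/ω real. Then for every r-th root of unity ω₁ (any complex number with |ω₁| = 1), one has |w − ω₁| ≥ min(|w − ω|, |w + ω|). -/
theorem stmt_18 (ω w : ℂ) (hω : ‖ω‖ = 1) (hw : w ≠ 0)
    (hreal : (w / ω).im = 0) (ω₁ : ℂ) (hω₁ : ‖ω₁‖ = 1) :
    min (‖w - ω‖) (‖w + ω‖) ≤ ‖w - ω₁‖ := by
  have hω0 : ω ≠ 0 := by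
    intro h; rw [h] at hω; simp at hω
  set t : ℝ := (w / ω).re with ht
  have hwt : w = (t : ℂ) * ω := by
    have : (w / ω : ℂ) = (t : ℂ) := by
      apply Complex.ext <;> simp [hreal, ht]
    field_simp at this
    linear_combination this
  -- lower bound: |w - ω₁| ≥ | |t| - 1 |
  have h1 : |‖w‖ - ‖ω₁‖| ≤ ‖w - ω₁‖ :=
    by simpa using abs_norm_sub_norm_le w ω₁
  have habsw : ‖w‖ = |t| := by
    rw [hwt, norm_mul, hω, Complex.norm_real, Real.norm_eq_abs, mul_one]
  rw [habsw, hω₁] at h1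
  refine le_trans ?_ h1
  have h2 : ‖w - ω‖ = |t - 1| := by
    rw [hwt]
    have : (t : ℂ) * ω - ω = ((t - 1 : ℝ) : ℂ) * ω := by push_cast; ring
    rw [this, norm_mul, hω, Complex.norm_real, Real.norm_eq_abs, mul_one]
  have h3 : ‖w + ω‖ = |t + 1| := by
    rw [hwt]
    have : (t : ℂ) * ω + ω = ((t + 1 : ℝ) : ℂ) * ω := by push_cast; ring
    rw [this, norm_mul, hω, Complex.norm_real, Real.norm_eq_abs, mul_one]
  rw [h2, h3]
  rcases le_or_gt 0 t with h | h
  · rw [abs_of_nonneg h]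
    exact min_le_left _ _ |>.trans_eq rfl
  · rw [abs_of_neg h]
    have : |-t - 1| = |t + 1| := by rw [← abs_neg]; ring_nf
    rw [this]
    exact min_le_right _ _
end

section
/- Let n ≥ 1 and g ∈ {0,1}, and set G_{n,g}(z) = F(n+1−g, n+1−1/r, 2n+2−g, z), the hypergeometric series with these parameters, where r ≥ 2 is an integer. Then for all complex z with |z| < 1, |G_{n,g}(z)| ≤ (1 − |z|)^{−(2n+1−g)/2}. -/
open Finset

/-- product form of factorial cast to ℝ -/
lemma aux_prod_fact (k : ℕ) : ∏ i ∈ Finset.range k, ((i : ℝ) + 1) = (k.factorial : ℝ) := by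
  induction k with
  | zero => simp
  | succ k ih => rw [Finset.prod_range_succ, ih, Nat.factorial_succ]; push_cast; ring

/-- Chu–Vandermonde for rising products over ℝ -/
lemma aux_vand (a b : ℝ) : ∀ k : ℕ,
    (∏ i ∈ Finset.range k, (a + b + i)) =
      ∑ ij ∈ Finset.HasAntidiagonal.antidiagonal k, (k.choose ij.1 : ℝ) *
        ((∏ i ∈ Finset.range ij.1, (a + i)) * (∏ i ∈ Finset.range ij.2, (b + i))) := by
  intro k
  induction k with
  | zero => simp
  | succ k ih =>
    rw [Finset.sum_antidiagonal_choose_succ_mul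
      (fun i j => (∏ t ∈ Finset.range i, (a + t)) * (∏ t ∈ Finset.range j, (b + t))) k,
      Finset.prod_range_succ, ih, Finset.sum_mul, ← Finset.sum_add_distrib]
    refine Finset.sum_congr rfl ?_
    intro ij hij
    have hk : ij.1 + ij.2 = k := Finset.HasAntidiagonal.mem_antidiagonal.mp hij
    have hsymm : (k.choose ij.2 : ℝ) = (k.choose ij.1 : ℝ) := by
      norm_cast
      exact Nat.choose_symm_of_eq_add (by omega)
    rw [Finset.prod_range_succ, Finset.prod_range_succ, hsymm]
    have hcast : (ij.1 : ℝ) + (ij.2 : ℝ) = (k : ℝ) := by exact_mod_cast congrArg Nat.cast hk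
    linear_combination (-(((k.choose ij.1 : ℕ) : ℝ) * (∏ t ∈ Finset.range ij.1, (a + t)) *
      (∏ t ∈ Finset.range ij.2, (b + t)))) * hcast

/-- rising-product/factorial quotient equals a binomial coefficient -/
lemma aux_cq (q : ℕ) (hq : 1 ≤ q) (m : ℕ) :
    ∏ i ∈ Finset.range m, (((q : ℝ) + i) / ((i : ℝ) + 1)) =
      (((m + (q - 1)).choose (q - 1) : ℕ) : ℝ) := by
  induction m with
  | zero => simp
  | succ m ih =>
    rw [Finset.prod_range_succ, ih]
    have key : (m + 1) * ((m + 1 + (q - 1)).choose (q - 1)) =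
        (q + m) * ((m + (q - 1)).choose (q - 1)) := by
      have h3 : (m + (q - 1)).succ * (m + (q - 1)).choose m =
          (m + (q - 1)).succ.choose m.succ * m.succ := Nat.add_one_mul_choose_eq (m + (q - 1)) m
      have e1 : (m + 1 + (q - 1)).choose (q - 1) = (m + (q - 1)).succ.choose m.succ := by
        rw [show (m + (q - 1)).succ = m + 1 + (q - 1) by omega]
        exact Nat.choose_symm_of_eq_add (by omega)
      have e2 : (m + (q - 1)).choose (q - 1) = (m + (q - 1)).choose m :=
        Nat.choose_symm_of_eq_add (by omega)
      have e3 : (m + (q - 1)).succ = q + m := by omega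
      rw [e3] at h3 e1
      rw [e1, e2]
      calc (m + 1) * (q + m).choose m.succ = (q + m).choose m.succ * m.succ := by
            rw [Nat.succ_eq_add_one, Nat.mul_comm]
        _ = (q + m) * ((m + (q - 1)).choose m) := h3.symm
    have hm1 : ((m : ℝ) + 1) ≠ 0 := by positivity
    field_simp
    have keyR : ((m : ℝ) + 1) * (((m + 1 + (q - 1)).choose (q - 1) : ℕ) : ℝ) =
        ((q : ℝ) + m) * (((m + (q - 1)).choose (q - 1) : ℕ) : ℝ) := by
      exact_mod_cast congrArg Nat.cast key
    linarith [keyR]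

/-- the binomial series bound with half-integer exponent -/
lemma aux_half_s19 (q : ℕ) (hq : 1 ≤ q) (x : ℝ) (hx0 : 0 ≤ x) (hx1 : x < 1) :
    HasSum (fun k => (∏ i ∈ Finset.range k, (((q : ℝ) / 2 + i) / ((i : ℝ) + 1))) * x ^ k)
      ((1 - x) ^ (-(q : ℝ) / 2)) := by
  set c : ℕ → ℝ := fun k => ∏ i ∈ Finset.range k, (((q : ℝ) / 2 + i) / ((i : ℝ) + 1)) with hc
  have hq2 : (0 : ℝ) < (q : ℝ) / 2 := by
    have : (1 : ℝ) ≤ (q : ℝ) := by exact_mod_cast hq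
    linarith
  have hc0 : ∀ k, 0 ≤ c k := by
    intro k
    apply Finset.prod_nonneg
    intro i _
    apply div_nonneg <;> positivity
  have hcq : ∀ k, c k ≤ ∏ i ∈ Finset.range k, (((q : ℝ) + i) / ((i : ℝ) + 1)) := by
    intro k
    apply Finset.prod_le_prod
    · intro i _; apply div_nonneg <;> positivity
    · intro i _
      apply div_le_div_of_nonneg_right ?_ (by positivity)
      · have : (1 : ℝ) ≤ (q : ℝ) := by exact_mod_cast hq
        linarith
  have hxn : ‖x‖ < 1 := by rwa [Real.norm_eq_abs, abs_of_nonneg hx0]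
  have hBig := hasSum_choose_mul_geometric_of_norm_lt_one (𝕜 := ℝ) (q - 1) hxn
  rw [Nat.sub_add_cancel hq] at hBig
  have hcq2 : ∀ k, c k ≤ (((k + (q - 1)).choose (q - 1) : ℕ) : ℝ) := by
    intro k; rw [← aux_cq q hq k]; exact hcq k
  have hs : Summable (fun k => c k * x ^ k) := by
    apply Summable.of_nonneg_of_le (fun k => by positivity)
      (fun k => mul_le_mul_of_nonneg_right (hcq2 k) (by positivity))
    exact hBig.summable
  have hSnorm : Summable (fun k => ‖c k * x ^ k‖) := by
    have he : (fun k => ‖c k * x ^ k‖) = fun k => c k * x ^ k := funext fun k => by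
      rw [Real.norm_eq_abs, abs_of_nonneg (mul_nonneg (hc0 k) (pow_nonneg hx0 k))]
    rw [he]; exact hs
  set S : ℝ := ∑' k, c k * x ^ k with hSdef
  have hS : HasSum (fun k => c k * x ^ k) S := hs.hasSum
  have hSnn : 0 ≤ S := tsum_nonneg (fun k => by positivity)
  -- Cauchy product
  have h_inner : ∀ m : ℕ, ∑ ij ∈ Finset.HasAntidiagonal.antidiagonal m,
      (c ij.1 * x ^ ij.1) * (c ij.2 * x ^ ij.2) =
      (((m + (q - 1)).choose (q - 1) : ℕ) : ℝ) * x ^ m := by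
    intro m
    have step1 : ∑ ij ∈ Finset.HasAntidiagonal.antidiagonal m, (c ij.1 * x ^ ij.1) * (c ij.2 * x ^ ij.2) =
        (∑ ij ∈ Finset.HasAntidiagonal.antidiagonal m, c ij.1 * c ij.2) * x ^ m := by
      rw [Finset.sum_mul]
      refine Finset.sum_congr rfl ?_
      intro ij hij
      have hk : ij.1 + ij.2 = m := Finset.HasAntidiagonal.mem_antidiagonal.mp hij
      rw [← hk, pow_add]; ring
    rw [step1]
    congr 1
    -- ∑ c i * c j = choose
    have hcP : ∀ j : ℕ, c j = (∏ i ∈ Finset.range j, ((q : ℝ) / 2 + i)) / (j.factorial : ℝ) := by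
      intro j
      simp only [hc]
      rw [Finset.prod_div_distrib, aux_prod_fact]
    have hvand := aux_vand ((q : ℝ) / 2) ((q : ℝ) / 2) m
    have hprodq : (∏ i ∈ Finset.range m, ((q : ℝ) / 2 + (q : ℝ) / 2 + i)) =
        ∏ i ∈ Finset.range m, ((q : ℝ) + i) := by
      refine Finset.prod_congr rfl ?_; intro i _; ring
    rw [hprodq] at hvand
    have hmain : (∑ ij ∈ Finset.HasAntidiagonal.antidiagonal m, c ij.1 * c ij.2) * (m.factorial : ℝ) =
        ∏ i ∈ Finset.range m, ((q : ℝ) + i) := by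
      rw [hvand, Finset.sum_mul]
      refine Finset.sum_congr rfl ?_
      intro ij hij
      have hk : ij.1 + ij.2 = m := Finset.HasAntidiagonal.mem_antidiagonal.mp hij
      have hfact : ((m.choose ij.1 : ℕ) : ℝ) * (ij.1.factorial : ℝ) * (ij.2.factorial : ℝ)
          = (m.factorial : ℝ) := by
        have := Nat.choose_mul_factorial_mul_factorial (show ij.1 ≤ m by omega)
        rw [show m - ij.1 = ij.2 by omega] at this
        exact_mod_cast congrArg Nat.cast this
      rw [hcP ij.1, hcP ij.2, div_mul_div_comm, div_mul_eq_mul_div,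
        div_eq_iff (by positivity : ((ij.1.factorial : ℝ) * (ij.2.factorial : ℝ)) ≠ 0)]
      linear_combination (-((∏ i ∈ Finset.range ij.1, ((q : ℝ) / 2 + i)) *
        (∏ i ∈ Finset.range ij.2, ((q : ℝ) / 2 + i)))) * hfact
    have hcast : ∏ i ∈ Finset.range m, ((q : ℝ) + i)
        = (((m + (q - 1)).choose (q - 1) : ℕ) : ℝ) * (m.factorial : ℝ) := by
      rw [← aux_cq q hq m, Finset.prod_div_distrib, aux_prod_fact]
      field_simp
    have hfm : (m.factorial : ℝ) ≠ 0 := by positivity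
    have := hmain.trans hcast
    exact mul_right_cancel₀ hfm this
  have hSsq : S * S = 1 / (1 - x) ^ q := by
    have := tsum_mul_tsum_eq_tsum_sum_antidiagonal_of_summable_norm hSnorm hSnorm
    rw [← hSdef] at this
    rw [this]
    have : (fun m => ∑ ij ∈ Finset.HasAntidiagonal.antidiagonal m, (c ij.1 * x ^ ij.1) * (c ij.2 * x ^ ij.2))
        = fun m => (((m + (q - 1)).choose (q - 1) : ℕ) : ℝ) * x ^ m := funext h_inner
    rw [this, hBig.tsum_eq]
  -- identify S with the rpow
  have h1x : (0 : ℝ) < 1 - x := by linarith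
  set R0 : ℝ := (1 - x) ^ (-(q : ℝ) / 2) with hR0
  have hR0pos : 0 < R0 := Real.rpow_pos_of_pos h1x _
  have hR0sq : R0 * R0 = 1 / (1 - x) ^ q := by
    rw [hR0, ← Real.rpow_add h1x]
    rw [show -(q : ℝ) / 2 + -(q : ℝ) / 2 = -(q : ℝ) by ring]
    rw [Real.rpow_neg h1x.le, Real.rpow_natCast]
    exact inv_eq_one_div _
  have hSR : S = R0 := by
    have h := hSsq.trans hR0sq.symm
    nlinarith [hR0pos, hSnn, h]
  rw [← hSR]
  exact hS

set_option maxHeartbeats 1000000 in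
theorem stmt_19 (r n g : ℕ) (hr : 2 ≤ r) (hn : 1 ≤ n) (hg : g ≤ 1)
    (z : ℂ) (hz : ‖z‖ < 1) :
    ∃ s : ℂ,
      HasSum (fun k =>
        ((∏ i ∈ Finset.range k,
            (((n : ℝ) + 1 - g + i) * ((n : ℝ) + 1 - 1 / r + i) /
              ((2 * (n : ℝ) + 2 - g + i) * (i + 1))) : ℝ) : ℂ) * z ^ k) s ∧
      ‖s‖ ≤ (1 - ‖z‖) ^ (-((2 * n + 1 - g : ℕ) : ℝ) / 2) := by
  set x : ℝ := ‖z‖ with hxdef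
  have hx0 : 0 ≤ x := norm_nonneg z
  have hx1 : x < 1 := hz
  set q : ℕ := 2 * n + 1 - g with hqdef
  have hq1 : 1 ≤ q := by omega
  have hqR : (q : ℝ) = 2 * (n : ℝ) + 1 - (g : ℝ) := by
    rw [hqdef]
    have : g ≤ 2 * n + 1 := by omega
    push_cast [this]
    ring
  set a : ℕ → ℝ := fun k => ∏ i ∈ Finset.range k,
    (((n : ℝ) + 1 - g + i) * ((n : ℝ) + 1 - 1 / r + i) /
      ((2 * (n : ℝ) + 2 - g + i) * (i + 1))) with ha
  set c : ℕ → ℝ := fun k => ∏ i ∈ Finset.range k, (((q : ℝ) / 2 + i) / ((i : ℝ) + 1)) with hc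
  -- basic facts
  have hN : (1 : ℝ) ≤ (n : ℝ) := by exact_mod_cast hn
  have hG0 : (0 : ℝ) ≤ (g : ℝ) := by positivity
  have hG1 : (g : ℝ) ≤ 1 := by exact_mod_cast hg
  have hR2 : (2 : ℝ) ≤ (r : ℝ) := by exact_mod_cast hr
  have hrinv0 : (0 : ℝ) < 1 / (r : ℝ) := by positivity
  have hrinv1 : 1 / (r : ℝ) ≤ 1 / 2 := by
    apply one_div_le_one_div_of_le <;> linarith
  have hfac_nonneg : ∀ i : ℕ,
      0 ≤ ((n : ℝ) + 1 - g + i) * ((n : ℝ) + 1 - 1 / r + i) /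
        ((2 * (n : ℝ) + 2 - g + i) * (i + 1)) := by
    intro i
    have hi : (0 : ℝ) ≤ (i : ℝ) := by positivity
    apply div_nonneg
    · apply mul_nonneg <;> nlinarith
    · apply mul_nonneg <;> nlinarith
  have ha0 : ∀ k, 0 ≤ a k := fun k => Finset.prod_nonneg (fun i _ => hfac_nonneg i)
  have hc0 : ∀ k, 0 ≤ c k := by
    intro k
    apply Finset.prod_nonneg
    intro i _
    have : (0 : ℝ) < (q : ℝ) / 2 := by rw [hqR]; nlinarith
    apply div_nonneg <;> positivity
  have hac : ∀ k, a k ≤ c k := by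
    intro k
    apply Finset.prod_le_prod (fun i _ => hfac_nonneg i)
    intro i _
    have hi : (0 : ℝ) ≤ (i : ℝ) := by positivity
    have hA0 : (0 : ℝ) ≤ (n : ℝ) + 1 - g + i := by linarith
    have hC0 : (0 : ℝ) < (2 * (n : ℝ) + 2 - g + i) * (i + 1) := by nlinarith
    have step1 : ((n : ℝ) + 1 - g + i) * ((n : ℝ) + 1 - 1 / r + i) /
          ((2 * (n : ℝ) + 2 - g + i) * (i + 1)) ≤
        ((n : ℝ) + 1 - g + i) * ((n : ℝ) + 1 + i) /
          ((2 * (n : ℝ) + 2 - g + i) * (i + 1)) := by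
      rw [div_le_div_iff_of_pos_right hC0]
      exact mul_le_mul_of_nonneg_left (by linarith) hA0
    refine step1.trans ?_
    rw [hqR]
    rw [div_le_div_iff₀ hC0 (by linarith)]
    nlinarith [mul_nonneg (by linarith : (0:ℝ) ≤ (i:ℝ) + 1) (sq_nonneg ((n:ℝ) + 1 + i - g/2)),
      mul_nonneg (by linarith : (0:ℝ) ≤ (i:ℝ) + 1) (sq_nonneg (g:ℝ)),
      mul_nonneg (by linarith : (0:ℝ) ≤ (i:ℝ) + 1) (mul_nonneg (by linarith : (0:ℝ) ≤ (n:ℝ) - g)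
        (by linarith : (0:ℝ) ≤ (n:ℝ) + i))]
  have hhalf := aux_half_s19 q hq1 x hx0 hx1
  have hcsum : Summable (fun k => c k * x ^ k) := hhalf.summable
  -- summability of the complex series
  have hnorm : ∀ k, ‖((a k : ℝ) : ℂ) * z ^ k‖ = a k * x ^ k := by
    intro k
    rw [norm_mul, norm_pow, Complex.norm_real, Real.norm_eq_abs, abs_of_nonneg (ha0 k)]
  have hasum : Summable (fun k => a k * x ^ k) := by
    apply Summable.of_nonneg_of_le (fun k => mul_nonneg (ha0 k) (pow_nonneg hx0 k))
      (fun k => mul_le_mul_of_nonneg_right (hac k) (pow_nonneg hx0 k)) hcsum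
  have hnormsum : Summable (fun k => ‖((a k : ℝ) : ℂ) * z ^ k‖) := by
    rw [show (fun k => ‖((a k : ℝ) : ℂ) * z ^ k‖) = fun k => a k * x ^ k from funext hnorm]
    exact hasum
  have hsummable : Summable (fun k => ((a k : ℝ) : ℂ) * z ^ k) := hnormsum.of_norm
  refine ⟨∑' k, ((a k : ℝ) : ℂ) * z ^ k, hsummable.hasSum, ?_⟩
  have habs : ‖∑' k, ((a k : ℝ) : ℂ) * z ^ k‖ ≤ ∑' k, ‖((a k : ℝ) : ℂ) * z ^ k‖ :=
    norm_tsum_le_tsum_norm hnormsum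
  have hstep : (∑' k, ‖((a k : ℝ) : ℂ) * z ^ k‖) ≤ (1 - x) ^ (-(q : ℝ) / 2) := by
    rw [show (fun k => ‖((a k : ℝ) : ℂ) * z ^ k‖) = fun k => a k * x ^ k from funext hnorm]
    rw [← hhalf.tsum_eq]
    apply Summable.tsum_le_tsum _ hasum hcsum
    intro k
    exact mul_le_mul_of_nonneg_right (hac k) (pow_nonneg hx0 k)
  exact le_trans habs hstep
end
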